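/- In the continuous-time Example-5 game, the pure stationary strategy pair (p,q) = (1,1) (both players play their first action at state 1) is an α-Nash equilibrium for every α ∈ (0, 2/3]; hence it is a Blackwell–Nash equilibrium. -/

import Mathlib

open Matrix Set

noncomputable section

/-- Transition rate matrix of the continuous-time Example-5 game. -/
def ex5Q (p q : ℝ) : Matrix (Fin 2) (Fin 2) ℝ :=
  !![-(p*(1-q) + (1-p)*q), p*(1-q) + (1-p)*q; 0, 0]

/-- Expected reward-rate vector of player 1 in the Example-5 game. -/
def ex5r1 (p q : ℝ) : Fin 2 → ℝ :=
  ![4*p*q + 4*p*(1-q) + 5*(1-p)*q + 3*(1-p)*(1-q), 3]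

/-- Expected reward-rate vector of player 2 in the Example-5 game. -/
def ex5r2 (p q : ℝ) : Fin 2 → ℝ :=
  ![4.4*p*q + 5*p*(1-q) + 6*(1-p)*q + 2*(1-p)*(1-q), 4]

/-- α-discounted value vector of player 1. -/
def ex5v1 (α p q : ℝ) : Fin 2 → ℝ :=
  (α • (1 : Matrix (Fin 2) (Fin 2) ℝ) - ex5Q p q)⁻¹.mulVec (ex5r1 p q)

/-- α-discounted value vector of player 2. -/
def ex5v2 (α p q : ℝ) : Fin 2 → ℝ :=
  (α • (1 : Matrix (Fin 2) (Fin 2) ℝ) - ex5Q p q)⁻¹.mulVec (ex5r2 p q)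

/-- `(p,q)` is an α-Nash equilibrium of the Example-5 game. -/
def ex5IsNash (α p q : ℝ) : Prop :=
  p ∈ Icc (0:ℝ) 1 ∧ q ∈ Icc (0:ℝ) 1 ∧
  (∀ p' ∈ Icc (0:ℝ) 1, ∀ s, ex5v1 α p' q s ≤ ex5v1 α p q s) ∧
  (∀ q' ∈ Icc (0:ℝ) 1, ∀ s, ex5v2 α p q' s ≤ ex5v2 α p q s)

lemma inv_upper (a b d : ℝ) (ha : a ≠ 0) (hd : d ≠ 0) :
    (!![a, b; 0, d])⁻¹ = !![1/a, -(b/(a*d)); 0, 1/d] := by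
  apply Matrix.inv_eq_right_inv
  rw [Matrix.mul_fin_two, Matrix.one_fin_two]
  ext i j
  fin_cases i <;> fin_cases j <;> (simp <;> field_simp <;> ring)

lemma mulVec_eval (a b c d : ℝ) (r : Fin 2 → ℝ) :
    (!![a, b; c, d]).mulVec r = ![a * r 0 + b * r 1, c * r 0 + d * r 1] := by
  funext s
  fin_cases s <;> simp [Matrix.mulVec, dotProduct, Fin.sum_univ_two]

lemma matrix_eval1 (α p : ℝ) :
    α • (1 : Matrix (Fin 2) (Fin 2) ℝ) - ex5Q p 1 = !![α + (1-p), -(1-p); 0, α] := by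
  ext i j
  fin_cases i <;> fin_cases j <;> (simp [ex5Q, Matrix.one_apply]; try ring)

lemma matrix_eval2 (α q : ℝ) :
    α • (1 : Matrix (Fin 2) (Fin 2) ℝ) - ex5Q 1 q = !![α + (1-q), -(1-q); 0, α] := by
  ext i j
  fin_cases i <;> fin_cases j <;> (simp [ex5Q, Matrix.one_apply]; try ring)

lemma v1_eval (α p : ℝ) (hα : α ≠ 0) (ha : α + (1-p) ≠ 0) :
    ex5v1 α p 1 = ![(α*(5-p) + (1-p)*3)/(α*(α+(1-p))), 3/α] := by
  rw [ex5v1, matrix_eval1, inv_upper _ _ _ ha hα, mulVec_eval]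
  funext s
  fin_cases s <;> (simp [ex5r1, inv_mul_eq_div]; try (field_simp; ring))

lemma v2_eval (α q : ℝ) (hα : α ≠ 0) (ha : α + (1-q) ≠ 0) :
    ex5v2 α 1 q = ![(α*(4.4*q + 5*(1-q)) + (1-q)*4)/(α*(α+(1-q))), 4/α] := by
  rw [ex5v2, matrix_eval2, inv_upper _ _ _ ha hα, mulVec_eval]
  funext s
  fin_cases s <;> (simp [ex5r2, inv_mul_eq_div]; try (field_simp; ring))

/-- In the continuous-time Example-5 game the pure pair `(1,1)` is an α-Nash
equilibrium for every `α ∈ (0, 2/3]`; hence it is a Blackwell–Nash equilibrium. -/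
theorem ex5_BNE : ∀ α ∈ Ioc (0:ℝ) (2/3), ex5IsNash α 1 1 := by
  rintro α ⟨hα0, hα23⟩
  have hαne : α ≠ 0 := ne_of_gt hα0
  have h11 : α + (1-(1:ℝ)) ≠ 0 := by simpa using hαne
  refine ⟨⟨zero_le_one, le_refl 1⟩, ⟨zero_le_one, le_refl 1⟩, ?_, ?_⟩
  · rintro p' ⟨hp0, hp1⟩ s
    have ha : (0:ℝ) < α + (1-p') := by linarith
    rw [v1_eval α p' hαne (ne_of_gt ha), v1_eval α 1 hαne h11]
    fin_cases s
    · show (α*(5-p') + (1-p')*3)/(α*(α+(1-p'))) ≤ (α*(5-1) + (1-(1:ℝ))*3)/(α*(α+(1-1)))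
      rw [div_le_div_iff₀ (by positivity) (by nlinarith)]
      nlinarith [mul_nonneg (mul_nonneg hα0.le hα0.le) (sub_nonneg.2 hp1)]
    · show (3:ℝ)/α ≤ 3/α
      exact le_refl _
  · rintro q' ⟨hq0, hq1⟩ s
    have ha : (0:ℝ) < α + (1-q') := by linarith
    rw [v2_eval α q' hαne (ne_of_gt ha), v2_eval α 1 hαne h11]
    fin_cases s
    · show (α*(4.4*q' + 5*(1-q')) + (1-q')*4)/(α*(α+(1-q'))) ≤
        (α*(4.4*1 + 5*(1-1)) + (1-(1:ℝ))*4)/(α*(α+(1-1)))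
      rw [div_le_div_iff₀ (by positivity) (by nlinarith)]
      nlinarith [mul_nonneg (mul_nonneg hα0.le hα0.le) (sub_nonneg.2 hq1),
        mul_nonneg hα0.le (sub_nonneg.2 hq1)]
    · show (4:ℝ)/α ≤ 4/α
      exact le_refl _
  
end
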